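/- Let X be a Banach space, k ∈ ℕ, and (x_s)_{s∈[ℕ]^k} a bounded k-sequence in X (i.e. there is C > 0 with ‖x_s‖ ≤ C for all s ∈ [ℕ]^k). Then there exist an infinite subset M of ℕ, a seminorm ‖·‖_* on the vector space of finitely supported real sequences under which the unit vector sequence (e_n)_n is spreading, and a null sequence (δ_n)_n of positive reals, such that (x_s)_{s∈[M]^k} generates (e_n)_n as a k-spreading model with respect to (δ_n)_n. -/

import Mathlib

/-- `s : Fin k → ℕ` is the increasing enumeration of a `k`-element subset of `M`. -/
def IsEnum (M : Set ℕ) {k : ℕ} (s : Fin k → ℕ) : Prop :=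
  StrictMono s ∧ ∀ i, s i ∈ M

/-- `(p j)_{j=1,…,l}` is a plegma family in `[M]^k`. -/
def IsPlegma (M : Set ℕ) {k l : ℕ} (p : Fin l → Fin k → ℕ) : Prop :=
  (∀ j, IsEnum M (p j)) ∧
  (∀ i : Fin k, StrictMono fun j : Fin l => p j i) ∧
  (∀ (i : Fin k) (hi : (i : ℕ) + 1 < k) (j j' : Fin l), p j i < p j' ⟨(i : ℕ) + 1, hi⟩)
/-- A null sequence of positive reals. -/
def IsNullPos (δ : ℕ → ℝ) : Prop :=
  (∀ n, 0 < δ n) ∧ Filter.Tendsto δ Filter.atTop (nhds 0)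

/-- The sequence `(e n)` is spreading with respect to the seminorm `ρ`:
`ρ (∑ a_i • e_i) = ρ (∑ a_i • e_{k_i})` for all strictly increasing `(k_i)`. -/
def IsSpreadingWith {E : Type*} [AddCommGroup E] [Module ℝ E]
    (ρ : Seminorm ℝ E) (e : ℕ → E) : Prop :=
  ∀ (n : ℕ) (a : Fin n → ℝ) (f : Fin n → ℕ), StrictMono f →
    ρ (∑ i, a i • e (i : ℕ)) = ρ (∑ i, a i • e (f i))

/-- The `k`-subsequence `(x_s)_{s ∈ [M]^k}` generates `(e n)` (in the seminormed space
`(E, ρ)`) as a `k`-spreading model with respect to the null sequence `δ`: for all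
`m ≤ l` (0-indexed), every plegma family `(p j)_{j=0}^{m}` in `[M]^k` whose first (hence
every) entry is `≥ M l`, and all coefficients in `[-1,1]`,
`| ‖∑ a_j • x_{p j}‖ - ρ (∑ a_j • e_j) | ≤ δ l`. The infinite set `M` is represented by
its increasing enumeration. -/
def Generates {X : Type*} [SeminormedAddCommGroup X] [NormedSpace ℝ X]
    {E : Type*} [AddCommGroup E] [Module ℝ E] (ρ : Seminorm ℝ E)
    {k : ℕ} (x : (Fin k → ℕ) → X) (M : ℕ → ℕ) (e : ℕ → E) (δ : ℕ → ℝ) : Prop :=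
  ∀ m l : ℕ, m ≤ l → ∀ p : Fin (m + 1) → Fin k → ℕ,
    IsPlegma (Set.range M) p →
    (∀ (j : Fin (m + 1)) (i : Fin k), M l ≤ p j i) →
    ∀ a : Fin (m + 1) → ℝ, (∀ j, a j ∈ Set.Icc (-1 : ℝ) 1) →
      |‖∑ j, a j • x (p j)‖ - ρ (∑ j, a j • e (j : ℕ))| ≤ δ l

/-!
A plegma family of `n` members in `[M]^k` is the same thing as an increasing `k n`-tuple in `M`,
read in lexicographic order of (coordinate, member). For fixed coefficients `a`, the norm
`‖∑ a_j x_{p_j}‖` is then a bounded function of increasing tuples, so by the infinite Ramsey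
theorem it oscillates by at most `2⁻ˡ` along a subsequence. Doing this at level `l` for a finite
grid of coefficient vectors of length `≤ l + 1` and diagonalising yields `M` along whose tails
these norms oscillate by at most `‖a‖ (2C + 1) 2⁻ˡ`. So they converge as the family moves to
infinity; the limit is a seminorm on finitely supported sequences, and it is spreading because
the members of a plegma family indexed by an increasing subsequence form a plegma family again.
-/

open Filter Topology

section Subsequences

theorem StrictMono.exists_strictMono_eq_comp {α : Type*} [Preorder α] {g : ℕ → ℕ}
    (hg : StrictMono g) {v : α → ℕ} (hv : StrictMono v) (hrange : Set.range v ⊆ Set.range g) :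
    ∃ u : α → ℕ, StrictMono u ∧ v = g ∘ u := by
  choose u hu using fun a => hrange ⟨a, rfl⟩
  refine ⟨u, fun a b hab => hg.lt_iff_lt.mp ?_, funext fun a => (hu a).symm⟩
  rw [hu, hu]
  exact hv hab

theorem StrictMono.exists_strictMono_eq_tail {α : Type*} [Preorder α] {M : ℕ → ℕ}
    (hM : StrictMono M) (l : ℕ) {t : α → ℕ} (ht : StrictMono t)
    (hrange : ∀ r, t r ∈ Set.range M) (hge : ∀ r, M l ≤ t r) :
    ∃ u : α → ℕ, StrictMono u ∧ t = fun r => M (l + u r) :=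
  (hM.comp (strictMono_id.const_add l)).exists_strictMono_eq_comp ht (by
    rintro _ ⟨r, rfl⟩
    obtain ⟨s, hs⟩ := hrange r
    have hls : l ≤ s := hM.le_iff_le.mp (hs ▸ hge r)
    exact ⟨s - l, by rw [← hs]; exact congrArg M (by simp; omega)⟩)

theorem exists_nested_strictMono (Q : ℕ → (ℕ → ℕ) → (ℕ → ℕ) → Prop)
    (hQ : ∀ i g, StrictMono g → ∃ f, StrictMono f ∧ Q i g f) :
    ∃ G : ℕ → ℕ → ℕ, (∀ i, StrictMono (G i)) ∧
      ∀ i, ∃ f, StrictMono f ∧ G (i + 1) = G i ∘ f ∧ Q i (G i) f := by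
  choose F hF hQF using hQ
  let G : ℕ → {g : ℕ → ℕ // StrictMono g} := fun i =>
    Nat.rec ⟨id, strictMono_id⟩ (fun i g => ⟨g.1 ∘ F i g.1 g.2, g.2.comp (hF i g.1 g.2)⟩) i
  exact ⟨fun i => (G i).1, fun i => (G i).2, fun i => ⟨_, hF i _ _, rfl, hQF i _ _⟩⟩

theorem antitone_range_of_nested {G : ℕ → ℕ → ℕ} (hG : ∀ i, ∃ f, G (i + 1) = G i ∘ f) :
    Antitone fun i => Set.range (G i) :=
  antitone_nat_of_succ_le fun i => by
    obtain ⟨f, hf⟩ := hG i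
    simpa only [hf] using Set.range_comp_subset_range f (G i)

/-- The diagonal `M j := G (j + 1) j` of nested subsequences `G l` with `P l (G (l + 1))`. -/
theorem exists_strictMono_forall_tail (P : ℕ → (ℕ → ℕ) → Prop)
    (hP : ∀ l g (f : ℕ → ℕ), StrictMono f → P l g → P l (g ∘ f))
    (hrefine : ∀ l g, StrictMono g → ∃ f : ℕ → ℕ, StrictMono f ∧ P l (g ∘ f)) :
    ∃ M : ℕ → ℕ, StrictMono M ∧ ∀ l, P l fun j => M (l + j) := by
  obtain ⟨G, hG, hnext⟩ := exists_nested_strictMono (fun l g f => P l (g ∘ f)) hrefine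
  choose F hF hGF hPF using hnext
  have hrange := antitone_range_of_nested fun i => ⟨F i, hGF i⟩
  have hM : StrictMono fun j => G (j + 1) j := strictMono_nat_of_lt_succ fun j => by
    rw [hGF (j + 1)]
    exact hG (j + 1) ((Nat.lt_succ_self j).trans_le ((hF (j + 1)).id_le (j + 1)))
  refine ⟨_, hM, fun l => ?_⟩
  obtain ⟨u, hu, htail⟩ := (hG (l + 1)).exists_strictMono_eq_comp
    (v := fun j => G (l + j + 1) (l + j)) (hM.comp (strictMono_id.const_add l)) (by
      rintro _ ⟨j, rfl⟩
      exact hrange (by omega : l + 1 ≤ l + j + 1) ⟨l + j, rfl⟩)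
  rw [htail, hGF l]
  exact hP l _ u hu (hPF l)

end Subsequences

section Ramsey

variable {κ : Type*}

/-- Heads `x i = G i 0` of nested subsequences `G (i + 1) ⊆ G i` chosen, by `ih`, so that the
colour of `(G i 0, s)` is constant for `s` increasing in `G (i + 1)`. -/
theorem exists_preHomogeneous {n : ℕ}
    (ih : ∀ c : (Fin n → ℕ) → κ, ∃ f : ℕ → ℕ, StrictMono f ∧ ∃ a, ∀ t, StrictMono t → c (f ∘ t) = a)
    (c : (Fin (n + 1) → ℕ) → κ) :
    ∃ x : ℕ → ℕ, StrictMono x ∧ ∃ a : ℕ → κ, ∀ i (s : Fin n → ℕ), StrictMono s →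
      (∀ j, i < s j) → c (Fin.cons (x i) (x ∘ s)) = a i := by
  obtain ⟨G, hG, hnext⟩ := exists_nested_strictMono
    (fun _ g f => ∃ a, 0 < f 0 ∧ ∀ s, StrictMono s → c (Fin.cons (g 0) (g ∘ f ∘ s)) = a)
    fun _ g _ => by
      obtain ⟨f, hf, a, ha⟩ := ih fun s => c (Fin.cons (g 0) (g ∘ Nat.succ ∘ s))
      exact ⟨Nat.succ ∘ f, (strictMono_id.add_const 1).comp hf, a, Nat.succ_pos _, ha⟩
  choose F hF hGF a hF0 ha using hnext
  have hrange := antitone_range_of_nested fun i => ⟨F i, hGF i⟩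
  have hx : StrictMono fun i => G i 0 := strictMono_nat_of_lt_succ fun i => by
    rw [hGF i]
    exact hG i (hF0 i)
  refine ⟨_, hx, a, fun i s hs hsi => ?_⟩
  obtain ⟨u, hu, hsu⟩ := (hG (i + 1)).exists_strictMono_eq_comp (hx.comp hs) (by
    rintro _ ⟨j, rfl⟩
    exact hrange (hsi j) ⟨0, rfl⟩)
  rw [hsu, hGF i]
  exact ha i u hu

theorem exists_monochromatic_subseq (n : ℕ) [Finite κ] (c : (Fin n → ℕ) → κ) :
    ∃ f : ℕ → ℕ, StrictMono f ∧ ∃ a, ∀ t, StrictMono t → c (f ∘ t) = a := by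
  induction n with
  | zero => exact ⟨id, strictMono_id, c Fin.elim0, fun t _ => congrArg c (funext fun i => i.elim0)⟩
  | succ n ih =>
    classical
    obtain ⟨x, hx, a, ha⟩ := exists_preHomogeneous ih c
    obtain ⟨y, hy⟩ := Finite.exists_infinite_fiber a
    let φ := Nat.orderEmbeddingOfSet (a ⁻¹' {y})
    have hφ (i : ℕ) : φ i ∈ a ⁻¹' {y} := by
      rw [← Nat.orderEmbeddingOfSet_range (a ⁻¹' {y})]
      exact Set.mem_range_self i
    refine ⟨x ∘ φ, hx.comp φ.strictMono, y, fun t ht => ?_⟩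
    rw [← Fin.cons_self_tail ((x ∘ φ) ∘ t), ← hφ (t 0)]
    exact ha _ (φ ∘ t ∘ Fin.succ) (φ.strictMono.comp (ht.comp Fin.strictMono_succ))
      fun j => φ.strictMono (ht (Fin.succ_pos j))

end Ramsey

section Oscillation

variable {n : ℕ}

def OscillationLE (F : (Fin n → ℕ) → ℝ) (g : ℕ → ℕ) (ε : ℝ) : Prop :=
  ∀ t t' : Fin n → ℕ, StrictMono t → StrictMono t' → |F (g ∘ t) - F (g ∘ t')| ≤ ε

theorem OscillationLE.comp {F : (Fin n → ℕ) → ℝ} {g f : ℕ → ℕ} {ε : ℝ}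
    (h : OscillationLE F g ε) (hf : StrictMono f) : OscillationLE F (g ∘ f) ε :=
  fun t t' ht ht' => h (f ∘ t) (f ∘ t') (hf.comp ht) (hf.comp ht')

/-- Ramsey for the finitely many colours `⌊F t / ε⌋`. -/
theorem exists_oscillationLE {F : (Fin n → ℕ) → ℝ} {B : ℝ} (hF : ∀ t, |F t| ≤ B)
    {ε : ℝ} (hε : 0 < ε) : ∃ f : ℕ → ℕ, StrictMono f ∧ OscillationLE F f ε := by
  have hmem (t) : ⌊F t / ε⌋ ∈ Set.Icc ⌊-B / ε⌋ ⌊B / ε⌋ := by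
    obtain ⟨h₁, h₂⟩ := abs_le.mp (hF t)
    exact ⟨Int.floor_le_floor (by gcongr), Int.floor_le_floor (by gcongr)⟩
  obtain ⟨f, hf, a, ha⟩ :=
    exists_monochromatic_subseq n fun t => (⟨_, hmem t⟩ : Set.Icc ⌊-B / ε⌋ ⌊B / ε⌋)
  refine ⟨f, hf, fun t t' ht ht' => ?_⟩
  have h := Int.abs_sub_lt_one_of_floor_eq_floor
    (congrArg Subtype.val ((ha t ht).trans (ha t' ht').symm))
  rw [div_sub_div_same, abs_div, abs_of_pos hε, div_lt_one hε] at h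
  exact h.le

theorem exists_forall_oscillationLE {ι : Type*} [Finite ι] {n : ι → ℕ}
    (F : ∀ i, (Fin (n i) → ℕ) → ℝ) (hF : ∀ i, ∃ B, ∀ t, |F i t| ≤ B) {ε : ℝ} (hε : 0 < ε)
    (g : ℕ → ℕ) : ∃ f : ℕ → ℕ, StrictMono f ∧ ∀ i, OscillationLE (F i) (g ∘ f) ε := by
  have := Fintype.ofFinite ι
  suffices ∀ s : Finset ι, ∃ f : ℕ → ℕ, StrictMono f ∧ ∀ i ∈ s, OscillationLE (F i) (g ∘ f) ε by
    simpa using this Finset.univ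
  intro s
  classical
  induction s using Finset.induction_on with
  | empty => exact ⟨id, strictMono_id, by simp⟩
  | insert i s _ ih =>
    obtain ⟨f, hf, hs⟩ := ih
    obtain ⟨B, hB⟩ := hF i
    obtain ⟨f', hf', hi⟩ :=
      exists_oscillationLE (F := fun t => F i ((g ∘ f) ∘ t)) (fun t => hB _) hε
    exact ⟨f ∘ f', hf.comp hf',
      (Finset.forall_mem_insert _ _ _).mpr ⟨hi, fun j hj => (hs j hj).comp hf'⟩⟩

end Oscillation

section PlegmaIndex

theorem strictMono_finProdFinEquiv_ofLex (m n : ℕ) :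
    StrictMono fun p : Fin m ×ₗ Fin n => finProdFinEquiv (ofLex p) := fun p q h => by
  rcases Prod.Lex.lt_iff.mp h with h | ⟨h₁, h₂⟩
  · have h₂ := (ofLex p).2.2
    simp only [Fin.lt_def, finProdFinEquiv_apply_val] at h ⊢
    nlinarith
  · simp only [Fin.lt_def, finProdFinEquiv_apply_val, h₁] at h₂ ⊢
    omega

def finProdFinLexOrderIso (m n : ℕ) : Fin m ×ₗ Fin n ≃o Fin (m * n) where
  toEquiv := ofLex.trans finProdFinEquiv
  map_rel_iff' := (strictMono_finProdFinEquiv_ofLex m n).le_iff_le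

variable {k n d : ℕ}

/-- Entry `(i, j)` of the plegma family encoded by `t` sits at the position of `(i, j)` in the
lexicographic order, so increasing tuples encode exactly the plegma families. -/
def toPlegma (t : Fin (k * n) → ℕ) (j : Fin n) (i : Fin k) : ℕ :=
  t (finProdFinLexOrderIso k n (toLex (i, j)))

def ofPlegma (p : Fin n → Fin k → ℕ) (r : Fin (k * n)) : ℕ :=
  p (ofLex ((finProdFinLexOrderIso k n).symm r)).2 (ofLex ((finProdFinLexOrderIso k n).symm r)).1

@[simp]
theorem toPlegma_ofPlegma (p : Fin n → Fin k → ℕ) : toPlegma (ofPlegma p) = p := by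
  ext j i
  simp [toPlegma, ofPlegma]

theorem IsPlegma.strictMono_ofPlegma {M : Set ℕ} {p : Fin n → Fin k → ℕ} (hp : IsPlegma M p) :
    StrictMono (ofPlegma p) := by
  intro r r' h
  have hlt := (finProdFinLexOrderIso k n).symm.strictMono h
  simp only [ofPlegma]
  generalize (finProdFinLexOrderIso k n).symm r = q, (finProdFinLexOrderIso k n).symm r' = q' at hlt
  rcases Prod.Lex.lt_iff.mp hlt with h | ⟨h₁, h₂⟩
  · have hi : ((ofLex q).1 : ℕ) + 1 < k := by have := (ofLex q').1.2; omega
    exact (hp.2.2 _ hi _ _).trans_le ((hp.1 _).1.monotone (Fin.le_def.mpr h))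
  · rw [h₁]
    exact hp.2.1 _ h₂

def spreadIdx (g : Fin n → Fin d) : Fin (k * n) → Fin (k * d) :=
  finProdFinLexOrderIso k d ∘ (fun p => toLex ((ofLex p).1, g (ofLex p).2)) ∘
    (finProdFinLexOrderIso k n).symm

theorem strictMono_spreadIdx {g : Fin n → Fin d} (hg : StrictMono g) :
    StrictMono (spreadIdx (k := k) g) := by
  refine (finProdFinLexOrderIso k d).strictMono.comp (StrictMono.comp (fun p q h => ?_)
    (finProdFinLexOrderIso k n).symm.strictMono)
  rcases Prod.Lex.lt_iff.mp h with h | ⟨h₁, h₂⟩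
  · exact Prod.Lex.lt_iff.mpr (Or.inl h)
  · exact Prod.Lex.lt_iff.mpr (Or.inr ⟨h₁, hg h₂⟩)

theorem toPlegma_comp_spreadIdx (t : Fin (k * d) → ℕ) (g : Fin n → Fin d) (j : Fin n) :
    toPlegma (t ∘ spreadIdx g) j = toPlegma t (g j) := by
  ext i
  simp [toPlegma, spreadIdx]

end PlegmaIndex

section PlegmaNorm

variable {X : Type*} [SeminormedAddCommGroup X] [NormedSpace ℝ X] {k n d : ℕ}
  (x : (Fin k → ℕ) → X)

def plegmaNorm (a : Fin n → ℝ) (t : Fin (k * n) → ℕ) : ℝ :=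
  ‖∑ j, a j • x (toPlegma t j)‖

theorem plegmaNorm_smul (c : ℝ) (a : Fin n → ℝ) (t : Fin (k * n) → ℕ) :
    plegmaNorm x (c • a) t = |c| * plegmaNorm x a t := by
  simp only [plegmaNorm, Pi.smul_apply, smul_eq_mul, mul_smul, ← Finset.smul_sum, norm_smul,
    Real.norm_eq_abs]

theorem plegmaNorm_add_le (a b : Fin n → ℝ) (t : Fin (k * n) → ℕ) :
    plegmaNorm x (a + b) t ≤ plegmaNorm x a t + plegmaNorm x b t := by
  simp only [plegmaNorm, Pi.add_apply, add_smul, Finset.sum_add_distrib]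
  exact norm_add_le _ _

theorem abs_plegmaNorm_sub_le {C : ℝ} (hx : ∀ s, ‖x s‖ ≤ C) (a b : Fin n → ℝ)
    (t : Fin (k * n) → ℕ) :
    |plegmaNorm x a t - plegmaNorm x b t| ≤ (∑ j, |a j - b j|) * C := by
  refine (abs_norm_sub_norm_le _ _).trans ?_
  rw [← Finset.sum_sub_distrib, Finset.sum_mul]
  refine (norm_sum_le _ _).trans (Finset.sum_le_sum fun j _ => ?_)
  rw [← sub_smul, norm_smul, Real.norm_eq_abs]
  exact mul_le_mul_of_nonneg_left (hx _) (abs_nonneg _)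

theorem abs_plegmaNorm_le {C : ℝ} (hx : ∀ s, ‖x s‖ ≤ C) (a : Fin n → ℝ)
    (t : Fin (k * n) → ℕ) : |plegmaNorm x a t| ≤ (∑ j, |a j|) * C := by
  simpa [plegmaNorm] using abs_plegmaNorm_sub_le x hx a 0 t

theorem plegmaNorm_comp_spreadIdx {g : Fin n → Fin d} (hg : StrictMono g) {b : Fin d → ℝ}
    (hb : ∀ j ∉ Set.range g, b j = 0) (t : Fin (k * d) → ℕ) :
    plegmaNorm x (b ∘ g) (t ∘ spreadIdx g) = plegmaNorm x b t := by
  simp only [plegmaNorm, Function.comp_apply, toPlegma_comp_spreadIdx]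
  exact congrArg norm (Fintype.sum_of_injective g hg.injective _ _ (fun j hj => by simp [hb j hj])
    fun _ => rfl)

end PlegmaNorm

section Stabilization

variable {X : Type*} [SeminormedAddCommGroup X] [NormedSpace ℝ X] {k : ℕ}
  (x : (Fin k → ℕ) → X)

/-- The mesh `1 / ((l + 1) 2 ^ l)` of the coefficient grid makes the `ℓ¹` rounding error of a
vector of length `≤ l + 1` at most `2⁻ˡ`. -/
def IsStable (l : ℕ) (g : ℕ → ℕ) : Prop :=
  ∀ n ≤ l + 1, ∀ z : Fin n → ℤ, (∀ j, |z j| ≤ (l + 1) * 2 ^ l) →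
    OscillationLE (plegmaNorm x fun j => (z j : ℝ) / ((l + 1) * 2 ^ l)) g ((1 / 2) ^ l)

theorem IsStable.comp {l : ℕ} {g f : ℕ → ℕ} (h : IsStable x l g) (hf : StrictMono f) :
    IsStable x l (g ∘ f) :=
  fun n hn z hz => (h n hn z hz).comp hf

theorem exists_isStable_comp {C : ℝ} (hx : ∀ s, ‖x s‖ ≤ C) (l : ℕ) (g : ℕ → ℕ) :
    ∃ f : ℕ → ℕ, StrictMono f ∧ IsStable x l (g ∘ f) := by
  let D : ℤ := (l + 1) * 2 ^ l
  obtain ⟨f, hf, hosc⟩ := exists_forall_oscillationLE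
    (ι := (n : Fin (l + 2)) × (Fin n → Set.Icc (-D) D))
    (fun i => plegmaNorm x fun j => ((i.2 j : ℤ) : ℝ) / ((l + 1) * 2 ^ l))
    (fun i => ⟨_, abs_plegmaNorm_le x hx _⟩) (ε := (1 / 2) ^ l) (by positivity) g
  exact ⟨f, hf, fun n hn z hz => hosc ⟨⟨n, by omega⟩, fun j => ⟨z j, abs_le.mp (hz j)⟩⟩⟩

noncomputable def errorBound (C : ℝ) (l : ℕ) : ℝ := (2 * C + 1) * (1 / 2) ^ l

theorem errorBound_pos {C : ℝ} (hC : 0 ≤ C) (l : ℕ) : 0 < errorBound C l := by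
  unfold errorBound; positivity

theorem tendsto_errorBound (C : ℝ) : Tendsto (errorBound C) atTop (𝓝 0) := by
  have := (tendsto_pow_atTop_nhds_zero_of_lt_one (r := (1 / 2 : ℝ))
    (by norm_num) (by norm_num)).const_mul (2 * C + 1)
  rwa [mul_zero] at this

theorem abs_sub_floor_mul_div_le (a : ℝ) {D : ℝ} (hD : 0 < D) : |a - ⌊a * D⌋ / D| ≤ 1 / D := by
  have : a - ⌊a * D⌋ / D = Int.fract (a * D) / D := by
    rw [← Int.self_sub_floor]; field_simp
  rw [this, abs_div, abs_of_nonneg (Int.fract_nonneg _), abs_of_pos hD]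
  exact div_le_div_of_nonneg_right (Int.fract_lt_one _).le hD.le

theorem IsStable.abs_sub_le_of_norm_le_one {C : ℝ} (hC : 0 ≤ C) (hx : ∀ s, ‖x s‖ ≤ C)
    {l n : ℕ} {g : ℕ → ℕ} (hg : IsStable x l g) (hn : n ≤ l + 1) {a : Fin n → ℝ} (ha : ‖a‖ ≤ 1)
    {t t' : Fin (k * n) → ℕ} (ht : StrictMono t) (ht' : StrictMono t') :
    |plegmaNorm x a (g ∘ t) - plegmaNorm x a (g ∘ t')| ≤ errorBound C l := by
  set D : ℝ := (l + 1) * 2 ^ l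
  have hD : 0 < D := by positivity
  let z : Fin n → ℤ := fun j => ⌊a j * D⌋
  have hz (j) : |z j| ≤ (l + 1) * 2 ^ l := by
    obtain ⟨h₁, h₂⟩ :=
      abs_le.mp ((Real.norm_eq_abs _).symm.trans_le ((norm_le_pi_norm a j).trans ha))
    refine abs_le.mpr ⟨Int.le_floor.mpr ?_, Int.floor_le_iff.mpr ?_⟩ <;> push_cast <;> nlinarith
  have hsum : ∑ j, |a j - (z j : ℝ) / D| ≤ (1 / 2) ^ l := calc
    ∑ j, |a j - (z j : ℝ) / D| ≤ ∑ _j : Fin n, 1 / D :=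
      Finset.sum_le_sum fun j _ => abs_sub_floor_mul_div_le (a j) hD
    _ = n / D := by simp [div_eq_mul_inv]
    _ ≤ (l + 1) / D := by gcongr; exact_mod_cast hn
    _ = (1 / 2) ^ l := by simp only [D, one_div, inv_pow]; field_simp
  have happrox (s : Fin (k * n) → ℕ) :
      |plegmaNorm x a s - plegmaNorm x (fun j => (z j : ℝ) / D) s| ≤ C * (1 / 2) ^ l :=
    (abs_plegmaNorm_sub_le x hx _ _ s).trans (by rw [mul_comm]; gcongr)
  have hosc := hg n hn z hz t t' ht ht'
  have h₁ := abs_le.mp (happrox (g ∘ t))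
  have h₂ := abs_le.mp (happrox (g ∘ t'))
  have h₃ := abs_le.mp hosc
  rw [errorBound, abs_le]
  constructor <;> nlinarith

theorem IsStable.abs_sub_le {C : ℝ} (hC : 0 ≤ C) (hx : ∀ s, ‖x s‖ ≤ C) {l n : ℕ} {g : ℕ → ℕ}
    (hg : IsStable x l g) (hn : n ≤ l + 1) (a : Fin n → ℝ) {t t' : Fin (k * n) → ℕ}
    (ht : StrictMono t) (ht' : StrictMono t') :
    |plegmaNorm x a (g ∘ t) - plegmaNorm x a (g ∘ t')| ≤ ‖a‖ * errorBound C l := by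
  rcases eq_or_ne a 0 with rfl | ha
  · simp [plegmaNorm]
  have hna : 0 < ‖a‖ := norm_pos_iff.mpr ha
  have hb : ‖‖a‖⁻¹ • a‖ ≤ 1 := by rw [norm_smul, norm_inv, norm_norm, inv_mul_cancel₀ hna.ne']
  have := hg.abs_sub_le_of_norm_le_one x hC hx hn hb ht ht'
  rwa [plegmaNorm_smul, plegmaNorm_smul, ← mul_sub, abs_mul, abs_abs, abs_inv, abs_norm,
    inv_mul_le_iff₀ hna] at this

end Stabilization

section Limit

variable {X : Type*} [SeminormedAddCommGroup X] [NormedSpace ℝ X] {k n d : ℕ}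
  (x : (Fin k → ℕ) → X) (M : ℕ → ℕ)

def HasTailOscillation (ε : ℕ → ℝ) : Prop :=
  ∀ ⦃l n : ℕ⦄, n ≤ l + 1 → ∀ (a : Fin n → ℝ) ⦃u u' : Fin (k * n) → ℕ⦄,
    StrictMono u → StrictMono u' →
    |plegmaNorm x a (fun r => M (l + u r)) - plegmaNorm x a (fun r => M (l + u' r))| ≤ ‖a‖ * ε l

theorem exists_hasTailOscillation {C : ℝ} (hC : 0 ≤ C) (hx : ∀ s, ‖x s‖ ≤ C) :
    ∃ M : ℕ → ℕ, StrictMono M ∧ HasTailOscillation x M (errorBound C) := by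
  obtain ⟨M, hM, hstable⟩ := exists_strictMono_forall_tail (IsStable x)
    (fun _ _ _ hf h => h.comp x hf) (fun l g _ => exists_isStable_comp x hx l g)
  exact ⟨M, hM, fun l _ hn a _ _ hu hu' => (hstable l).abs_sub_le x hC hx hn a hu hu'⟩

noncomputable def plegmaLimit (a : Fin n → ℝ) : ℝ :=
  limUnder atTop fun l => plegmaNorm x a fun r : Fin (k * n) => M (l + r)

variable {x M} {ε : ℕ → ℝ}

theorem HasTailOscillation.tendsto_plegmaLimit (hM : HasTailOscillation x M ε)
    (hε : Tendsto ε atTop (𝓝 0)) (a : Fin n → ℝ) :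
    Tendsto (fun l => plegmaNorm x a fun r : Fin (k * n) => M (l + r)) atTop
      (𝓝 (plegmaLimit x M a)) := by
  refine tendsto_nhds_limUnder (cauchySeq_tendsto_of_complete (Metric.cauchySeq_iff'.mpr
    fun δ hδ => ?_))
  obtain ⟨N, hnN, hN⟩ := ((eventually_ge_atTop n).and
    ((hε.const_mul ‖a‖).eventually (gt_mem_nhds (by rwa [mul_zero])))).exists
  refine ⟨N, fun l hl => ?_⟩
  have hshift : (fun r : Fin (k * n) => M (l + r)) = fun r : Fin (k * n) => M (N + ((l - N) + r)) :=
    funext fun r => congrArg M (by omega)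
  rw [Real.dist_eq, hshift]
  exact (hM (by omega) a (strictMono_id.const_add (l - N) |>.comp Fin.val_strictMono)
    Fin.val_strictMono).trans_lt hN

theorem HasTailOscillation.abs_sub_plegmaLimit_le (hM : HasTailOscillation x M ε)
    (hε : Tendsto ε atTop (𝓝 0)) {l : ℕ} (hn : n ≤ l + 1) (a : Fin n → ℝ)
    {u : Fin (k * n) → ℕ} (hu : StrictMono u) :
    |plegmaNorm x a (fun r => M (l + u r)) - plegmaLimit x M a| ≤ ‖a‖ * ε l := by
  refine le_of_tendsto ((tendsto_const_nhds.sub (hM.tendsto_plegmaLimit hε a)).abs)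
    (eventually_atTop.mpr ⟨l, fun l' hl' => ?_⟩)
  have hshift :
      (fun r : Fin (k * n) => M (l' + r)) = fun r : Fin (k * n) => M (l + ((l' - l) + r)) :=
    funext fun r => congrArg M (by omega)
  rw [hshift]
  exact hM hn a hu (strictMono_id.const_add (l' - l) |>.comp Fin.val_strictMono)

theorem HasTailOscillation.tendsto_plegmaLimit_of_tails (hM : HasTailOscillation x M ε)
    (hε : Tendsto ε atTop (𝓝 0)) (a : Fin n → ℝ) {u : ℕ → Fin (k * n) → ℕ}
    (hu : ∀ l, StrictMono (u l)) :
    Tendsto (fun l => plegmaNorm x a fun r => M (l + u l r)) atTop (𝓝 (plegmaLimit x M a)) := by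
  rw [tendsto_iff_norm_sub_tendsto_zero]
  refine squeeze_zero' (Eventually.of_forall fun _ => norm_nonneg _)
    (eventually_atTop.mpr ⟨n, fun l hl => ?_⟩) (by simpa using hε.const_mul ‖a‖)
  exact hM.abs_sub_plegmaLimit_le hε (by omega) a (hu l)

theorem HasTailOscillation.plegmaLimit_comp (hM : HasTailOscillation x M ε)
    (hε : Tendsto ε atTop (𝓝 0)) {g : Fin n → Fin d} (hg : StrictMono g) {b : Fin d → ℝ}
    (hb : ∀ j ∉ Set.range g, b j = 0) :
    plegmaLimit x M (b ∘ g) = plegmaLimit x M b := by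
  refine tendsto_nhds_unique (hM.tendsto_plegmaLimit_of_tails hε (b ∘ g)
    (u := fun _ r => spreadIdx g r) fun _ => Fin.val_strictMono.comp (strictMono_spreadIdx hg)) ?_
  have := hM.tendsto_plegmaLimit hε b
  simp only [← plegmaNorm_comp_spreadIdx x hg hb] at this
  exact this

theorem HasTailOscillation.plegmaLimit_smul (hM : HasTailOscillation x M ε)
    (hε : Tendsto ε atTop (𝓝 0)) (c : ℝ) (a : Fin n → ℝ) :
    plegmaLimit x M (c • a) = |c| * plegmaLimit x M a :=
  tendsto_nhds_unique (hM.tendsto_plegmaLimit hε (c • a))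
    (by simpa only [plegmaNorm_smul] using (hM.tendsto_plegmaLimit hε a).const_mul |c|)

theorem HasTailOscillation.plegmaLimit_add_le (hM : HasTailOscillation x M ε)
    (hε : Tendsto ε atTop (𝓝 0)) (a b : Fin n → ℝ) :
    plegmaLimit x M (a + b) ≤ plegmaLimit x M a + plegmaLimit x M b :=
  le_of_tendsto_of_tendsto' (hM.tendsto_plegmaLimit hε (a + b))
    ((hM.tendsto_plegmaLimit hε a).add (hM.tendsto_plegmaLimit hε b))
    fun _ => plegmaNorm_add_le x a b _

end Limit

section LimitSeminorm

variable {X : Type*} [SeminormedAddCommGroup X] [NormedSpace ℝ X] {k n : ℕ}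
  {x : (Fin k → ℕ) → X} {M : ℕ → ℕ} {ε : ℕ → ℝ}

def supBound (v : ℕ →₀ ℝ) : ℕ := v.support.sup (· + 1)

theorem apply_eq_zero_of_supBound_le {v : ℕ →₀ ℝ} {j : ℕ} (h : supBound v ≤ j) : v j = 0 := by
  by_contra hj
  have := Finset.le_sup (f := (· + 1)) (Finsupp.mem_support_iff.mpr hj)
  unfold supBound at h
  omega

variable (x M) in
noncomputable def limitNorm (v : ℕ →₀ ℝ) : ℝ :=
  plegmaLimit x M fun j : Fin (supBound v) => v j

theorem HasTailOscillation.plegmaLimit_castLE (hM : HasTailOscillation x M ε)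
    (hε : Tendsto ε atTop (𝓝 0)) {v : ℕ →₀ ℝ} {N D : ℕ} (hv : ∀ j, N ≤ j → v j = 0)
    (hND : N ≤ D) :
    plegmaLimit x M (fun j : Fin D => v j) = plegmaLimit x M fun j : Fin N => v j := by
  refine (hM.plegmaLimit_comp hε (Fin.strictMono_castLE hND) fun j hj => hv j ?_).symm
  by_contra hjN
  exact hj ⟨⟨j, not_le.mp hjN⟩, rfl⟩

theorem HasTailOscillation.limitNorm_eq (hM : HasTailOscillation x M ε)
    (hε : Tendsto ε atTop (𝓝 0)) {v : ℕ →₀ ℝ} {N : ℕ} (hv : ∀ j, N ≤ j → v j = 0) :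
    limitNorm x M v = plegmaLimit x M fun j : Fin N => v j := by
  rw [limitNorm, ← hM.plegmaLimit_castLE hε (fun _ => apply_eq_zero_of_supBound_le)
    (le_max_left _ N), hM.plegmaLimit_castLE hε hv (le_max_right _ N)]

theorem HasTailOscillation.limitNorm_add_le (hM : HasTailOscillation x M ε)
    (hε : Tendsto ε atTop (𝓝 0)) (v w : ℕ →₀ ℝ) :
    limitNorm x M (v + w) ≤ limitNorm x M v + limitNorm x M w := by
  set N := max (supBound v) (supBound w)
  have hv (j) (hj : N ≤ j) : v j = 0 := apply_eq_zero_of_supBound_le (le_of_max_le_left hj)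
  have hw (j) (hj : N ≤ j) : w j = 0 := apply_eq_zero_of_supBound_le (le_of_max_le_right hj)
  rw [hM.limitNorm_eq hε (N := N) fun j hj => by simp [hv j hj, hw j hj], hM.limitNorm_eq hε hv,
    hM.limitNorm_eq hε hw]
  exact hM.plegmaLimit_add_le hε _ _

theorem HasTailOscillation.limitNorm_smul (hM : HasTailOscillation x M ε)
    (hε : Tendsto ε atTop (𝓝 0)) (c : ℝ) (v : ℕ →₀ ℝ) :
    limitNorm x M (c • v) = ‖c‖ * limitNorm x M v := by
  rw [hM.limitNorm_eq hε (N := supBound v) fun j hj => by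
    simp [apply_eq_zero_of_supBound_le hj], limitNorm, Real.norm_eq_abs]
  exact hM.plegmaLimit_smul hε c _

theorem HasTailOscillation.limitNorm_sum_smul_single (hM : HasTailOscillation x M ε)
    (hε : Tendsto ε atTop (𝓝 0)) (a : Fin n → ℝ) {f : Fin n → ℕ} (hf : StrictMono f) :
    limitNorm x M (∑ i, a i • Finsupp.single (f i) 1) = plegmaLimit x M a := by
  set D := Finset.univ.sup fun i => f i + 1
  have hfD (i) : f i < D := Finset.le_sup (f := fun i => f i + 1) (Finset.mem_univ i)
  have happly (j : ℕ) : (∑ i, a i • Finsupp.single (f i) (1 : ℝ)) j =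
      ∑ i, if f i = j then a i else 0 := by
    simp [Finsupp.single_apply]
  let g : Fin n → Fin D := fun i => ⟨f i, hfD i⟩
  rw [hM.limitNorm_eq hε (N := D) ?_, ← hM.plegmaLimit_comp hε (g := g) (fun _ _ h => hf h) ?_]
  · congr 1
    funext i
    simp only [Function.comp_apply, g, happly, hf.injective.eq_iff, Finset.sum_ite_eq',
      Finset.mem_univ, if_true]
  · intro j hj
    rw [happly]
    exact Finset.sum_eq_zero fun i _ => if_neg fun h => hj ⟨i, Fin.ext h⟩
  · intro j hj
    rw [happly]
    exact Finset.sum_eq_zero fun i _ => if_neg fun h : f i = j => (h ▸ hfD i).not_ge hj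

end LimitSeminorm

theorem statement7_general {X : Type*} [NormedAddCommGroup X] [NormedSpace ℝ X]
    (k : ℕ) (x : (Fin k → ℕ) → X)
    (hbdd : ∃ C > 0, ∀ s : Fin k → ℕ, ‖x s‖ ≤ C) :
    ∃ (M : ℕ → ℕ) (ρ : Seminorm ℝ (ℕ →₀ ℝ)) (δ : ℕ → ℝ),
      StrictMono M ∧ IsNullPos δ ∧
      IsSpreadingWith ρ (fun n => Finsupp.single n (1 : ℝ)) ∧
      Generates ρ x M (fun n => Finsupp.single n (1 : ℝ)) δ := by
  obtain ⟨C, hC, hx⟩ := hbdd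
  obtain ⟨M, hMmono, hM⟩ := exists_hasTailOscillation x hC.le hx
  have hε := tendsto_errorBound C
  refine ⟨M, Seminorm.of (limitNorm x M) (hM.limitNorm_add_le hε) (hM.limitNorm_smul hε),
    errorBound C, hMmono, ⟨errorBound_pos hC.le, hε⟩, fun n a f hf => ?_,
    fun m l hml p hp hge a ha => ?_⟩
  · exact (hM.limitNorm_sum_smul_single hε a Fin.val_strictMono).trans
      (hM.limitNorm_sum_smul_single hε a hf).symm
  · obtain ⟨u, hu, hpu⟩ := hMmono.exists_strictMono_eq_tail l hp.strictMono_ofPlegma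
      (fun _ => (hp.1 _).2 _) fun _ => hge _ _
    have hnorm : ‖∑ j, a j • x (p j)‖ = plegmaNorm x a (ofPlegma p) := by simp [plegmaNorm]
    have ha₁ : ‖a‖ ≤ 1 := (pi_norm_le_iff_of_nonneg zero_le_one).mpr fun j => abs_le.mpr (ha j)
    change |_ - limitNorm x M _| ≤ _
    rw [hnorm, hpu, hM.limitNorm_sum_smul_single hε a Fin.val_strictMono]
    exact (hM.abs_sub_plegmaLimit_le hε (by omega) a hu).trans
      (mul_le_of_le_one_left (errorBound_pos hC.le l).le ha₁)

/-- existence of k-spreading models. Every bounded `k`-sequence in a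
Banach space `X` has a `k`-subsequence generating a spreading sequence, living on the
space `ℕ →₀ ℝ` of finitely supported real sequences (with unit vectors
`fun n => Finsupp.single n 1`) equipped with some seminorm, as a `k`-spreading model
with respect to some null sequence of positive reals. -/
theorem statement7 {X : Type*} [NormedAddCommGroup X] [NormedSpace ℝ X] [CompleteSpace X]
    (k : ℕ) (hk : 0 < k) (x : (Fin k → ℕ) → X)
    (hbdd : ∃ C > 0, ∀ s : Fin k → ℕ, ‖x s‖ ≤ C) :
    ∃ (M : ℕ → ℕ) (ρ : Seminorm ℝ (ℕ →₀ ℝ)) (δ : ℕ → ℝ),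
      StrictMono M ∧ IsNullPos δ ∧
      IsSpreadingWith ρ (fun n => Finsupp.single n (1 : ℝ)) ∧
      Generates ρ x M (fun n => Finsupp.single n (1 : ℝ)) δ :=
  statement7_general k x hbdd
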